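/- The scenario sample bound tends to satisfaction: for any ε ∈ (0,1), β ∈ (0,1), and fixed n_b, n_c, there exists N₀ such that for all N ≥ N₀, 2^{n_b} Σ_{i=0}^{n_c-1} (N choose i) ε^i (1-ε)^{N-i} ≤ β. -/
import Mathlib

open Filter Topology

theorem stmt_15 (ε β : ℝ) (hε0 : 0 < ε) (hε1 : ε < 1) (hβ0 : 0 < β)
    (hβ1 : β < 1) (nb nc : ℕ) (hnc : 1 ≤ nc) :
    ∃ N₀ : ℕ, ∀ N ≥ N₀,
      (2 : ℝ) ^ nb *
          ∑ i ∈ Finset.range nc, (N.choose i : ℝ) * ε ^ i * (1 - ε) ^ (N - i)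
        ≤ β := by
  set r : ℝ := 1 - ε with hr
  have hr0 : 0 < r := by simp [hr]; linarith
  have hr1 : r < 1 := by simp [hr]; linarith
  -- each term tends to 0
  have hterm : ∀ i : ℕ, Tendsto
      (fun N : ℕ => (N.choose i : ℝ) * ε ^ i * r ^ (N - i)) atTop (𝓝 0) := by
    intro i
    have hg : Tendsto (fun N : ℕ => r⁻¹ ^ i * ((N : ℝ) ^ i * r ^ N)) atTop (𝓝 0) := by
      have := (tendsto_pow_const_mul_const_pow_of_lt_one i hr0.le hr1).const_mul (r⁻¹ ^ i)
      simpa using this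
    apply squeeze_zero' (g := fun N : ℕ => r⁻¹ ^ i * ((N : ℝ) ^ i * r ^ N))
    · filter_upwards with N
      positivity
    · filter_upwards [eventually_ge_atTop i] with N hN
      have key : r⁻¹ ^ i * ((N : ℝ) ^ i * r ^ N) = (N : ℝ) ^ i * r ^ (N - i) := by
        have hN' : r ^ N = r ^ (N - i) * r ^ i := by
          rw [← pow_add]; congr 1; omega
        rw [hN', inv_pow]
        field_simp
      rw [key]
      apply mul_le_mul_of_nonneg_right _ (by positivity)
      calc (N.choose i : ℝ) * ε ^ i ≤ (N : ℝ) ^ i * 1 := by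
            apply mul_le_mul
            · exact_mod_cast Nat.choose_le_pow N i
            · exact pow_le_one₀ hε0.le hε1.le
            · positivity
            · positivity
        _ = (N : ℝ) ^ i := mul_one _
    · exact hg
  have hsum : Tendsto (fun N : ℕ => (2 : ℝ) ^ nb *
      ∑ i ∈ Finset.range nc, (N.choose i : ℝ) * ε ^ i * r ^ (N - i)) atTop (𝓝 0) := by
    have : Tendsto (fun N : ℕ =>
        ∑ i ∈ Finset.range nc, (N.choose i : ℝ) * ε ^ i * r ^ (N - i)) atTop (𝓝 0) := by
      have := tendsto_finset_sum (Finset.range nc) (fun i _ => hterm i)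
      simpa using this
    simpa using this.const_mul ((2 : ℝ) ^ nb)
  have hev : ∀ᶠ N in atTop, (2 : ℝ) ^ nb *
      ∑ i ∈ Finset.range nc, (N.choose i : ℝ) * ε ^ i * r ^ (N - i) ≤ β :=
    hsum.eventually (eventually_le_nhds hβ0)
  rcases eventually_atTop.mp hev with ⟨N₀, hN₀⟩
  exact ⟨N₀, hN₀⟩
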